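/- Let D be an integral domain with quotient field K. Then (▲^{v_D})_f = (▲^{t_D})_f = t_{D[X]}, where v_D and t_D are the v- and t-operations of D and t_{D[X]} is the t-operation of D[X]. -/
import Mathlib


/- Preliminaries: semistar operations on an integral domain `R` with quotient field `F`
(submodules of `F` over `R`), polynomial extension of semistar operations from `D`
to `D[X]` (viewed inside the quotient field `K(X) = RatFunc K` of `D[X]`). -/

open Polynomial Pointwise

set_option synthInstance.maxHeartbeats 1000000
set_option maxHeartbeats 1000000

open scoped Classical

noncomputable section

section Generic

variable (R F : Type*) [CommRing R] [Field F] [Algebra R F]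

/-- `o` is a semistar operation of `R` (on the nonzero `R`-submodules of the
quotient field `F`). -/
def IsSemistarOp (o : Submodule R F → Submodule R F) : Prop :=
  (∀ x : F, x ≠ 0 → ∀ E : Submodule R F, E ≠ ⊥ → o (x • E) = x • o E) ∧
  (∀ E G : Submodule R F, E ≠ ⊥ → G ≠ ⊥ → E ≤ G → o E ≤ o G) ∧
  (∀ E : Submodule R F, E ≠ ⊥ → E ≤ o E) ∧
  (∀ E : Submodule R F, E ≠ ⊥ → o (o E) = o E)

/-- The finite-type operation `⋆_f` associated to `⋆`:
`E^{⋆_f} = ⋃ { G^⋆ : G nonzero finitely generated, G ⊆ E }`. -/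
def finTypeFun (o : Submodule R F → Submodule R F) : Submodule R F → Submodule R F :=
  fun E => ⨆ (G : Submodule R F) (_ : G ≠ ⊥) (_ : G.FG) (_ : G ≤ E), o G

/-- `⋆` is of finite type, i.e. `⋆ = ⋆_f`. -/
def IsFiniteTypeFun (o : Submodule R F → Submodule R F) : Prop :=
  ∀ E : Submodule R F, E ≠ ⊥ → o E = finTypeFun R F o E

/-- `⋆` is stable: `(E ∩ G)^⋆ = E^⋆ ∩ G^⋆`. -/
def IsStableFun (o : Submodule R F → Submodule R F) : Prop :=
  ∀ E G : Submodule R F, E ≠ ⊥ → G ≠ ⊥ → o (E ⊓ G) = o E ⊓ o G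

/-- An ideal of `R` viewed as an `R`-submodule of `F`. -/
def idealSub (J : Ideal R) : Submodule R F := Submodule.map (Algebra.linearMap R F) J

/-- `(E : J) = { x ∈ F : xJ ⊆ E }` for an ideal `J` of `R`. -/
def colonIdeal (E : Submodule R F) (J : Ideal R) : Submodule R F where
  carrier := { x : F | ∀ a ∈ J, a • x ∈ E }
  add_mem' := fun {x y} hx hy a ha => by
    simpa [smul_add] using E.add_mem (hx a ha) (hy a ha)
  zero_mem' := fun a _ => by simpa using E.zero_mem
  smul_mem' := fun r x hx a ha => by
    rw [← mul_smul, mul_comm, mul_smul]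
    exact E.smul_mem r (hx a ha)

/-- The stable finite-type operation `tilde ⋆` associated to `⋆`:
`E^{tilde ⋆} = ⋃ { (E : J) : J nonzero finitely generated integral ideal with J^⋆ = R^⋆ }`. -/
def tildeFun (o : Submodule R F → Submodule R F) : Submodule R F → Submodule R F :=
  fun E => ⨆ (J : Ideal R) (_ : J ≠ ⊥) (_ : J.FG)
    (_ : o (idealSub R F J) = o (1 : Submodule R F)), colonIdeal R F E J

/-- The `v`-operation: `E^v = (R : (R : E))` for `E` a nonzero fractional ideal,
and `E^v = F` otherwise. -/
def vFun : Submodule R F → Submodule R F := fun E =>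
  if ∃ d : R, d ≠ 0 ∧ ∀ x ∈ E, d • x ∈ (1 : Submodule R F) then
    (1 : Submodule R F) / ((1 : Submodule R F) / E)
  else ⊤

/-- The `eab` operation `⋆_a` associated to `⋆`. -/
def aFun (o : Submodule R F → Submodule R F) : Submodule R F → Submodule R F := fun E =>
  ⨆ (G : Submodule R F) (_ : G ≠ ⊥) (_ : G.FG) (_ : G ≤ E),
    ⨆ (H : Submodule R F) (_ : H ≠ ⊥) (_ : H.FG), o (G * H) / o H

/-- `I` is a quasi-`⋆`-ideal: a nonzero integral ideal with `I^⋆ ∩ R = I`. -/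
def isQuasiIdealFun (o : Submodule R F → Submodule R F) (I : Ideal R) : Prop :=
  I ≠ ⊥ ∧ (o (idealSub R F I)).comap (Algebra.linearMap R F) = I

/-- `I` is a quasi-`⋆`-maximal ideal: maximal among proper quasi-`⋆`-ideals. -/
def isQuasiMaximalFun (o : Submodule R F → Submodule R F) (I : Ideal R) : Prop :=
  isQuasiIdealFun R F o I ∧ I ≠ ⊤ ∧
    ∀ J : Ideal R, isQuasiIdealFun R F o J → J ≠ ⊤ → I ≤ J → I = J

/-- The `v`-operation relative to an overring `R'` (an `R`-submodule of `F`):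
`B ↦ (R' : (R' : B))` for `B` a nonzero fractional ideal of `R'`, `F` otherwise. -/
def vRelFun (R' B : Submodule R F) : Submodule R F :=
  if ∃ z ∈ R', z ≠ 0 ∧ ∀ x ∈ B, z * x ∈ R' then R' / (R' / B) else ⊤

/-- The `t`-operation relative to an overring `R'`: finite-type operation associated to
the `v`-operation of `R'` (the union being over nonzero finitely generated
`R'`-submodules contained in `B`). -/
def tRelFun (R' B : Submodule R F) : Submodule R F :=
  ⨆ (G : Submodule R F) (_ : G ≠ ⊥)
    (_ : ∃ S : Finset F, G = R' * Submodule.span R (S : Set F)) (_ : G ≤ B),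
    vRelFun R F R' G

end Generic

section Poly

variable (D K : Type*) [CommRing D] [IsDomain D] [Field K] [Algebra D K] [IsFractionRing D K]

/-- The canonical ring homomorphism `D[X] → K(X)`. -/
def polyToRF : Polynomial D →+* RatFunc K :=
  (algebraMap (Polynomial K) (RatFunc K)).comp (Polynomial.mapRingHom (algebraMap D K))

/-- `K(X)` is an algebra over `D[X]`; in fact it is the quotient field of `D[X]`. -/
instance (priority := 100) : Algebra (Polynomial D) (RatFunc K) := (polyToRF D K).toAlgebra

/-- For a `D`-submodule `E` of `K`, the `D[X]`-submodule `E[X]` of `K(X)`: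
polynomials all of whose coefficients lie in `E`. -/
def polyExt (E : Submodule D K) : Submodule (Polynomial D) (RatFunc K) where
  carrier := { f : RatFunc K | ∃ p : Polynomial K, (∀ n, p.coeff n ∈ E) ∧
      f = algebraMap (Polynomial K) (RatFunc K) p }
  add_mem' := by
    rintro f g ⟨p, hp, rfl⟩ ⟨q, hq, rfl⟩
    exact ⟨p + q, fun n => by simpa using E.add_mem (hp n) (hq n), by simp⟩
  zero_mem' := ⟨0, fun n => by simpa using E.zero_mem, by simp⟩
  smul_mem' := by
    rintro c f ⟨p, hp, rfl⟩
    refine ⟨Polynomial.map (algebraMap D K) c * p, fun n => ?_, ?_⟩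
    · rw [Polynomial.coeff_mul]
      refine Submodule.sum_mem E fun ij _ => ?_
      rw [Polynomial.coeff_map, ← Algebra.smul_def]
      exact E.smul_mem _ (hp ij.2)
    · rw [Algebra.smul_def, RingHom.algebraMap_toAlgebra, map_mul]
      unfold polyToRF
      simp

/-- The contraction `B ∩ K` of a `D[X]`-submodule `B` of `K(X)` to a `D`-submodule of `K`. -/
def contractToBase (B : Submodule (Polynomial D) (RatFunc K)) : Submodule D K where
  carrier := { x : K | algebraMap K (RatFunc K) x ∈ B }
  add_mem' := fun {x y} hx hy => by
    simpa [Set.mem_setOf_eq, map_add] using B.add_mem hx hy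
  zero_mem' := by simpa using B.zero_mem
  smul_mem' := fun d x hx => by
    have h : algebraMap K (RatFunc K) (d • x)
        = (Polynomial.C d : Polynomial D) • (algebraMap K (RatFunc K) x) := by
      rw [Algebra.smul_def d x, map_mul, Algebra.smul_def, RingHom.algebraMap_toAlgebra]
      unfold polyToRF
      simp only [RingHom.coe_comp, Function.comp_apply, Polynomial.coe_mapRingHom,
        Polynomial.map_C, RatFunc.algebraMap_C, RatFunc.algebraMap_eq_C]
    show algebraMap K (RatFunc K) (d • x) ∈ B
    rw [h]
    exact B.smul_mem (Polynomial.C d) hx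

/-- The content `c_D(S)`: the `D`-submodule of `K` generated by the coefficients of all
polynomials belonging to `S`. -/
def contentOf (S : Set (RatFunc K)) : Submodule D K :=
  Submodule.span D { x : K | ∃ p : Polynomial K,
    algebraMap (Polynomial K) (RatFunc K) p ∈ S ∧ ∃ n, p.coeff n = x }

/-- The semistar operation `▲^⋆_T` of `D[X]` associated to a semistar operation `⋆` of `D`
and an overring `T` of `D`:
`A ↦ ⋂ { z⁻¹ (c_D(zA))^⋆[X] : z ∈ (T[X] : A), z ≠ 0 }` if `(T[X] : A) ≠ 0`, else `A ↦ K(X)`. -/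
def bigTriT (o : Submodule D K → Submodule D K) (T : Subalgebra D K) :
    Submodule (Polynomial D) (RatFunc K) → Submodule (Polynomial D) (RatFunc K) := fun A =>
  if ∃ z : RatFunc K, z ≠ 0 ∧ ∀ a ∈ A, z * a ∈ polyExt D K (Subalgebra.toSubmodule T) then
    ⨅ (z : RatFunc K) (_ : z ≠ 0) (_ : ∀ a ∈ A, z * a ∈ polyExt D K (Subalgebra.toSubmodule T)),
      z⁻¹ • polyExt D K (o (contentOf D K (z • (A : Set (RatFunc K)))))
  else ⊤

/-- `▲^⋆ := ▲^⋆_K`, the largest strict extension of `⋆` to `D[X]`. -/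
def bigTri (o : Submodule D K → Submodule D K) :
    Submodule (Polynomial D) (RatFunc K) → Submodule (Polynomial D) (RatFunc K) :=
  bigTriT D K o ⊤

/-- `b` is an extension of `⋆` to `D[X]` : `E^⋆ = (E[X])^b ∩ K`. -/
def IsExtensionFun (o : Submodule D K → Submodule D K)
    (b : Submodule (Polynomial D) (RatFunc K) → Submodule (Polynomial D) (RatFunc K)) : Prop :=
  ∀ E : Submodule D K, E ≠ ⊥ → o E = contractToBase D K (b (polyExt D K E))

/-- `b` is a strict extension of `⋆` to `D[X]` : `(E[X])^b = E^⋆[X]`. -/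
def IsStrictExtensionFun (o : Submodule D K → Submodule D K)
    (b : Submodule (Polynomial D) (RatFunc K) → Submodule (Polynomial D) (RatFunc K)) : Prop :=
  ∀ E : Submodule D K, E ≠ ⊥ → b (polyExt D K E) = polyExt D K (o E)

/-- `⋏^⋆ : A ↦ ⋂ { A^★ : ★ a semistar operation of D[X] extending ⋆ }`. -/
def curlyFun (o : Submodule D K → Submodule D K) :
    Submodule (Polynomial D) (RatFunc K) → Submodule (Polynomial D) (RatFunc K) := fun A =>
  ⨅ (b : Submodule (Polynomial D) (RatFunc K) → Submodule (Polynomial D) (RatFunc K))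
    (_ : IsSemistarOp (Polynomial D) (RatFunc K) b) (_ : IsExtensionFun D K o b), b A

/-- The localization `D_Q` of `D` at a prime ideal `Q`, as a `D`-submodule of `K`. -/
def locSub (Q : Ideal D) : Submodule D K :=
  Submodule.span D { x : K | ∃ s : D, s ∉ Q ∧ s • x ∈ (1 : Submodule D K) }

/-- The content of an ideal `I` of `D[X]`: the `D`-submodule of `K` generated by the
coefficients of the polynomials in `I`. -/
def contentOfIdeal (I : Ideal (Polynomial D)) : Submodule D K :=
  Submodule.span D { x : K | ∃ p ∈ I, ∃ n, algebraMap D K (Polynomial.coeff p n) = x }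

/-- The Nagata ring `D_Q(X)`, as a subset of `K(X)`: fractions `f/g` with
`f, g ∈ D_Q[X]` and the coefficients of `g` generating the unit ideal of `D_Q`. -/
def nagataSet (Q : Ideal D) : Set (RatFunc K) :=
  { u : RatFunc K | ∃ g : Polynomial K, (∀ n, g.coeff n ∈ locSub D K Q) ∧
      locSub D K Q * Submodule.span D { x : K | ∃ n, g.coeff n = x } = locSub D K Q ∧
      u * algebraMap (Polynomial K) (RatFunc K) g ∈ polyExt D K (locSub D K Q) }

end Poly
section Helpers

variable (D K : Type*) [CommRing D] [IsDomain D] [Field K] [Algebra D K] [IsFractionRing D K]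

lemma iotaInj : Function.Injective (algebraMap (Polynomial K) (RatFunc K)) :=
  IsFractionRing.injective _ _

lemma polyToRF_apply (q : Polynomial D) :
    polyToRF D K q = algebraMap (Polynomial K) (RatFunc K) (q.map (algebraMap D K)) := rfl

lemma algMapDX_eq : algebraMap (Polynomial D) (RatFunc K) = polyToRF D K :=
  rfl

lemma polyToRF_inj : Function.Injective (polyToRF D K) := by
  intro a b h
  rw [polyToRF_apply, polyToRF_apply] at h
  exact Polynomial.map_injective _ (IsFractionRing.injective D K) (iotaInj K h)

lemma mem_oneDX {f : RatFunc K} :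
    f ∈ (1 : Submodule (Polynomial D) (RatFunc K)) ↔ ∃ q : Polynomial D, polyToRF D K q = f := by
  rw [Submodule.mem_one]; rfl

lemma mem_polyExt {E : Submodule D K} {f : RatFunc K} :
    f ∈ polyExt D K E ↔ ∃ p : Polynomial K, (∀ n, p.coeff n ∈ E) ∧
      f = algebraMap (Polynomial K) (RatFunc K) p := Iff.rfl

lemma mem_polyExt_topT {f : RatFunc K} :
    f ∈ polyExt D K (Subalgebra.toSubmodule (⊤ : Subalgebra D K)) ↔
      ∃ p : Polynomial K, f = algebraMap (Polynomial K) (RatFunc K) p := by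
  constructor
  · rintro ⟨p, -, rfl⟩; exact ⟨p, rfl⟩
  · rintro ⟨p, rfl⟩; exact ⟨p, fun n => by simp, rfl⟩

lemma exists_map_of_coeff_mem {p : Polynomial K} (h : ∀ n, p.coeff n ∈ (1 : Submodule D K)) :
    ∃ q : Polynomial D, q.map (algebraMap D K) = p := by
  have hp : p ∈ (Polynomial.mapRingHom (algebraMap D K)).range := by
    rw [Polynomial.mem_map_range]
    intro n
    rcases Submodule.mem_one.1 (h n) with ⟨y, hy⟩
    exact ⟨y, hy⟩
  rcases hp with ⟨q, hq⟩
  exact ⟨q, hq⟩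

lemma oneDX_le_polyExt_one :
    (1 : Submodule (Polynomial D) (RatFunc K)) ≤ polyExt D K (1 : Submodule D K) := by
  rintro f hf
  rcases (mem_oneDX D K).1 hf with ⟨q, rfl⟩
  exact ⟨q.map (algebraMap D K), fun n => by
    rw [Polynomial.coeff_map]; exact Submodule.mem_one.2 ⟨q.coeff n, rfl⟩, rfl⟩

lemma polyExt_mono {E E' : Submodule D K} (h : E ≤ E') : polyExt D K E ≤ polyExt D K E' := by
  rintro f ⟨p, hp, hf⟩
  exact ⟨p, fun n => h (hp n), hf⟩

lemma oneDX_le_polyExt_top :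
    (1 : Submodule (Polynomial D) (RatFunc K)) ≤
      polyExt D K (Subalgebra.toSubmodule (⊤ : Subalgebra D K)) := by
  intro f hf
  rcases (mem_oneDX D K).1 hf with ⟨q, rfl⟩
  exact (mem_polyExt_topT D K).2 ⟨q.map (algebraMap D K), rfl⟩

lemma polyExt_le_oneDX {E : Submodule D K} (hE : E ≤ 1) :
    polyExt D K E ≤ (1 : Submodule (Polynomial D) (RatFunc K)) := by
  rintro f ⟨p, hp, rfl⟩
  rcases exists_map_of_coeff_mem D K (fun n => hE (hp n)) with ⟨q, rfl⟩
  exact (mem_oneDX D K).2 ⟨q, rfl⟩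

end Helpers
section Helpers2
set_option linter.unusedSectionVars false

variable (D K : Type*) [CommRing D] [IsDomain D] [Field K] [Algebra D K] [IsFractionRing D K]

variable {R F : Type*} [CommRing R] [IsDomain R] [Field F] [Algebra R F]

lemma le_vFun_div (E : Submodule R F) :
    (1 : Submodule R F) / ((1 : Submodule R F) / E) ≤ vFun R F E := by
  unfold vFun
  split
  · exact le_rfl
  · exact le_top

lemma vFun_mono {E C : Submodule R F} (h : E ≤ C) : vFun R F E ≤ vFun R F C := by
  by_cases hC : ∃ d : R, d ≠ 0 ∧ ∀ x ∈ C, d • x ∈ (1 : Submodule R F)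
  · rcases hC with ⟨d, hd, hdC⟩
    rw [show vFun R F C = 1 / (1 / C) from if_pos ⟨d, hd, hdC⟩,
      show vFun R F E = 1 / (1 / E) from if_pos ⟨d, hd, fun x hx => hdC x (h hx)⟩]
    intro x hx
    rw [Submodule.mem_div_iff_forall_mul_mem] at hx ⊢
    intro y hy
    refine hx y ?_
    rw [Submodule.mem_div_iff_forall_mul_mem] at hy ⊢
    exact fun c hc => hy c (h hc)
  · rw [show vFun R F C = ⊤ from if_neg hC]
    exact le_top

lemma vFun_le_one {E : Submodule R F} (hE : E ≤ 1) : vFun R F E ≤ 1 := by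
  rw [show vFun R F E = 1 / (1 / E) from
    if_pos ⟨1, one_ne_zero, fun x hx => by simpa using hE hx⟩]
  intro x hx
  rw [Submodule.mem_div_iff_forall_mul_mem] at hx
  have h1 : (1 : F) ∈ (1 : Submodule R F) / E := by
    rw [Submodule.mem_div_iff_forall_mul_mem]
    intro c hc
    simpa using hE hc
  simpa using hx 1 h1

lemma vFun_eq_finType {C : Submodule R F} (h1 : C ≠ ⊥) (h2 : C.FG) :
    vFun R F C = finTypeFun R F (vFun R F) C := by
  apply le_antisymm
  · exact le_iSup_of_le C <| le_iSup_of_le h1 <| le_iSup_of_le h2 <| le_iSup_of_le le_rfl le_rfl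
  · exact iSup_le fun G => iSup_le fun _ => iSup_le fun _ => iSup_le fun hGC => vFun_mono hGC

end Helpers2
section Helpers3
set_option linter.unusedSectionVars false

variable (D K : Type*) [CommRing D] [IsDomain D] [Field K] [Algebra D K] [IsFractionRing D K]

lemma content_fg {G : Submodule (Polynomial D) (RatFunc K)} (hG : G.FG) {z : RatFunc K}
    (hz : ∀ a ∈ G, z * a ∈ polyExt D K (Subalgebra.toSubmodule (⊤ : Subalgebra D K))) :
    (contentOf D K (z • (G : Set (RatFunc K)))).FG := by
  classical
  obtain ⟨s, hs⟩ := hG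
  have hrep : ∀ g ∈ G, ∃ p : Polynomial K, z * g = algebraMap (Polynomial K) (RatFunc K) p :=
    fun g hg => (mem_polyExt_topT D K).1 (hz g hg)
  set pf : RatFunc K → Polynomial K := fun w =>
    if h : ∃ p : Polynomial K, w = algebraMap (Polynomial K) (RatFunc K) p then h.choose else 0
    with hpfdef
  have hpf : ∀ w, (∃ p : Polynomial K, w = algebraMap (Polynomial K) (RatFunc K) p) →
      w = algebraMap (Polynomial K) (RatFunc K) (pf w) := by
    intro w h
    rw [hpfdef]
    simp only [dif_pos h]
    exact h.choose_spec
  set T : Finset K := s.biUnion (fun g =>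
    (Finset.range ((pf (z * g)).natDegree + 1)).image (pf (z * g)).coeff) with hT
  have main : ∀ g ∈ Submodule.span (Polynomial D) (s : Set (RatFunc K)),
      ∀ p : Polynomial K, z * g = algebraMap (Polynomial K) (RatFunc K) p →
      ∀ n, p.coeff n ∈ Submodule.span D (T : Set K) := by
    intro g hg
    induction hg using Submodule.span_induction with
    | mem x hx =>
      intro p hp n
      have hxG : x ∈ G := by rw [← hs]; exact Submodule.subset_span hx
      have h1 : z * x = algebraMap (Polynomial K) (RatFunc K) (pf (z * x)) :=
        hpf _ (hrep x hxG)
      have hpe : p = pf (z * x) := iotaInj K (by rw [← hp, ← h1])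
      by_cases h0 : p.coeff n = 0
      · rw [h0]; exact Submodule.zero_mem _
      · apply Submodule.subset_span
        rw [hT]
        refine Finset.mem_coe.2 (Finset.mem_biUnion.2 ⟨x, hx, Finset.mem_image.2
          ⟨n, Finset.mem_range.2 ?_, by rw [← hpe]⟩⟩)
        rw [← hpe]
        exact Nat.lt_succ_of_le (Polynomial.le_natDegree_of_ne_zero h0)
    | zero =>
      intro p hp n
      have : p = 0 := iotaInj K (by rw [← hp, mul_zero, map_zero])
      rw [this]
      simpa using Submodule.zero_mem _
    | add x y hx hy ihx ihy =>
      intro p hp n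
      have hxG : x ∈ G := by rw [← hs]; exact hx
      obtain ⟨px, hpx⟩ := hrep x hxG
      have hpy : z * y = algebraMap (Polynomial K) (RatFunc K) (p - px) := by
        rw [map_sub, ← hp, ← hpx]
        ring
      have : p.coeff n = px.coeff n + (p - px).coeff n := by
        simp [Polynomial.coeff_sub]
      rw [this]
      exact Submodule.add_mem _ (ihx px hpx n) (ihy (p - px) hpy n)
    | smul a x hx ih =>
      intro p hp n
      have hxG : x ∈ G := by rw [← hs]; exact hx
      obtain ⟨px, hpx⟩ := hrep x hxG
      have hax : a • x = polyToRF D K a * x := by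
        rw [Algebra.smul_def, algMapDX_eq]
      have hpe : p = a.map (algebraMap D K) * px := by
        apply iotaInj K
        rw [← hp, hax, map_mul, ← hpx, polyToRF_apply]
        ring
      rw [hpe, Polynomial.coeff_mul]
      refine Submodule.sum_mem _ fun ij _ => ?_
      rw [Polynomial.coeff_map, ← Algebra.smul_def]
      exact Submodule.smul_mem _ _ (ih px hpx ij.2)
  refine ⟨T, le_antisymm ?_ ?_⟩
  · rw [Submodule.span_le]
    intro x hx
    rw [hT] at hx
    rcases Finset.mem_biUnion.1 (Finset.mem_coe.1 hx) with ⟨g, hg, hx2⟩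
    rcases Finset.mem_image.1 hx2 with ⟨n, -, rfl⟩
    have hgG : g ∈ G := by rw [← hs]; exact Submodule.subset_span hg
    apply Submodule.subset_span
    refine ⟨pf (z * g), ?_, n, rfl⟩
    have : z * g ∈ z • (G : Set (RatFunc K)) := by
      rw [show z * g = z • g from rfl]
      exact Set.smul_mem_smul_set hgG
    rwa [hpf (z * g) (hrep g hgG)] at this
  · rw [contentOf, Submodule.span_le]
    rintro x ⟨p, hp, n, rfl⟩
    rcases Set.mem_smul_set.1 hp with ⟨g, hgmem, hzg⟩
    have hgs : g ∈ Submodule.span (Polynomial D) (s : Set (RatFunc K)) := by rw [hs]; exact hgmem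
    exact main g hgs p (by rw [← hzg]; rfl) n

lemma content_ne_bot {G : Submodule (Polynomial D) (RatFunc K)} (hG0 : G ≠ ⊥) {z : RatFunc K}
    (hz0 : z ≠ 0)
    (hz : ∀ a ∈ G, z * a ∈ polyExt D K (Subalgebra.toSubmodule (⊤ : Subalgebra D K))) :
    contentOf D K (z • (G : Set (RatFunc K))) ≠ ⊥ := by
  obtain ⟨g, hg, hgne⟩ := Submodule.exists_mem_ne_zero_of_ne_bot hG0
  obtain ⟨p, hp⟩ := (mem_polyExt_topT D K).1 (hz g hg)
  have hpne : p ≠ 0 := by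
    rintro rfl
    rw [map_zero] at hp
    exact mul_ne_zero hz0 hgne hp
  obtain ⟨n, hn⟩ : ∃ n, p.coeff n ≠ 0 := by
    by_contra h
    push_neg at h
    exact hpne (Polynomial.ext fun n => by simp [h n])
  refine Submodule.ne_bot_iff _ |>.2 ⟨p.coeff n, ?_, hn⟩
  apply Submodule.subset_span
  refine ⟨p, ?_, n, rfl⟩
  rw [← hp]
  exact Set.smul_mem_smul_set hg

end Helpers3
section Helpers4
set_option linter.unusedSectionVars false

variable (D K : Type*) [CommRing D] [IsDomain D] [Field K] [Algebra D K] [IsFractionRing D K]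

lemma exists_t0 {C : Submodule D K} (hC : C.FG) :
    ∃ t : K, t ≠ 0 ∧ t ∈ (1 : Submodule D K) / C := by
  obtain ⟨T, hT⟩ := hC
  obtain ⟨b, hb⟩ := IsLocalization.exist_integer_multiples_of_finset (nonZeroDivisors D) T
  refine ⟨algebraMap D K b, ?_, ?_⟩
  · intro h
    have hb0 : (b : D) ≠ 0 := nonZeroDivisors.coe_ne_zero b
    exact hb0 (IsFractionRing.injective D K (by rw [h, map_zero]))
  · rw [Submodule.mem_div_iff_forall_mul_mem]
    intro y hy
    rw [← hT] at hy
    induction hy using Submodule.span_induction with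
    | mem x hx =>
      rcases hb x (Finset.mem_coe.1 hx) with ⟨q, hq⟩
      refine Submodule.mem_one.2 ⟨q, ?_⟩
      rw [hq, Algebra.smul_def]
    | zero => rw [mul_zero]; exact Submodule.zero_mem _
    | add x y _ _ ihx ihy => rw [mul_add]; exact Submodule.add_mem _ ihx ihy
    | smul a x _ ih =>
      rw [Algebra.smul_def, mul_left_comm, ← Algebra.smul_def]
      exact Submodule.smul_mem _ _ ih

lemma exists_denom_polyK (p : Polynomial K) :
    ∃ c : D, c ≠ 0 ∧ ∃ q : Polynomial D,
      q.map (algebraMap D K) = Polynomial.C (algebraMap D K c) * p := by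
  classical
  obtain ⟨b, hb⟩ := IsLocalization.exist_integer_multiples_of_finset (nonZeroDivisors D)
    ((Finset.range (p.natDegree + 1)).image p.coeff)
  have hcf : ∀ n, (Polynomial.C (algebraMap D K b) * p).coeff n ∈ (1 : Submodule D K) := by
    intro n
    rw [Polynomial.coeff_C_mul]
    by_cases h0 : p.coeff n = 0
    · rw [h0, mul_zero]; exact Submodule.zero_mem _
    · have hn : p.coeff n ∈ (Finset.range (p.natDegree + 1)).image p.coeff :=
        Finset.mem_image.2 ⟨n, Finset.mem_range.2
          (Nat.lt_succ_of_le (Polynomial.le_natDegree_of_ne_zero h0)), rfl⟩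
      rcases hb _ hn with ⟨q, hq⟩
      refine Submodule.mem_one.2 ⟨q, ?_⟩
      rw [hq, Algebra.smul_def]
  obtain ⟨q, hq⟩ := exists_map_of_coeff_mem D K hcf
  exact ⟨b, nonZeroDivisors.coe_ne_zero b, q, hq⟩

lemma exists_denom_ratfunc (w : RatFunc K) :
    ∃ d : Polynomial D, d ≠ 0 ∧ polyToRF D K d * w ∈ (1 : Submodule (Polynomial D) (RatFunc K)) := by
  obtain ⟨c1, hc1, q1, hq1⟩ := exists_denom_polyK D K w.num
  obtain ⟨c2, hc2, q2, hq2⟩ := exists_denom_polyK D K w.denom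
  refine ⟨Polynomial.C c1 * q2, ?_, ?_⟩
  · refine mul_ne_zero (by simpa using hc1) ?_
    intro h
    apply RatFunc.denom_ne_zero w
    have : q2.map (algebraMap D K) = 0 := by rw [h]; simp
    rw [hq2] at this
    rcases mul_eq_zero.1 this with h1 | h1
    · exact absurd (by simpa using h1) (fun hh => hc2 (IsFractionRing.injective D K
        (by rw [hh, map_zero])))
    · exact h1
  · have hd0 : algebraMap (Polynomial K) (RatFunc K) w.denom ≠ 0 := by
      intro h
      exact RatFunc.denom_ne_zero w (iotaInj K (by rw [h, map_zero]))
    have hden : algebraMap (Polynomial K) (RatFunc K) w.denom * w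
        = algebraMap (Polynomial K) (RatFunc K) w.num := by
      have hnd := RatFunc.num_div_denom w
      rw [div_eq_iff hd0] at hnd
      rw [hnd]; ring
    refine (mem_oneDX D K).2 ⟨Polynomial.C c2 * q1, ?_⟩
    rw [polyToRF_apply, polyToRF_apply, Polynomial.map_mul, Polynomial.map_mul,
      Polynomial.map_C, Polynomial.map_C, hq1, hq2]
    simp only [map_mul]
    rw [← hden]
    ring
end Helpers4
section Helpers5
set_option linter.unusedSectionVars false

variable (D K : Type*) [CommRing D] [IsDomain D] [Field K] [Algebra D K] [IsFractionRing D K]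

lemma vguard {G : Submodule (Polynomial D) (RatFunc K)} (hG : G.FG) :
    ∃ d : Polynomial D, d ≠ 0 ∧ ∀ x ∈ G, d • x ∈ (1 : Submodule (Polynomial D) (RatFunc K)) := by
  classical
  obtain ⟨s, hs⟩ := hG
  choose f hf1 hf2 using fun w : RatFunc K => exists_denom_ratfunc D K w
  refine ⟨∏ w ∈ s, f w, ?_, ?_⟩
  · rw [Finset.prod_ne_zero_iff]; exact fun w _ => hf1 w
  · intro x hx
    rw [← hs] at hx
    induction hx using Submodule.span_induction with
    | mem x hxs =>
      have hxs' := Finset.mem_coe.1 hxs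
      rw [← Finset.prod_erase_mul s f hxs', mul_smul]
      have hfx : f x • x ∈ (1 : Submodule (Polynomial D) (RatFunc K)) := by
        rw [Algebra.smul_def, algMapDX_eq]; exact hf2 x
      exact Submodule.smul_mem _ _ hfx
    | zero => rw [smul_zero]; exact Submodule.zero_mem _
    | add x y _ _ ihx ihy => rw [smul_add]; exact Submodule.add_mem _ ihx ihy
    | smul a x _ ih =>
      rw [smul_smul, mul_comm, ← smul_smul]
      exact Submodule.smul_mem _ _ ih

lemma triguard {G : Submodule (Polynomial D) (RatFunc K)} (hG : G.FG) :
    ∃ z : RatFunc K, z ≠ 0 ∧ ∀ a ∈ G,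
      z * a ∈ polyExt D K (Subalgebra.toSubmodule (⊤ : Subalgebra D K)) := by
  obtain ⟨d, hd0, hd⟩ := vguard D K hG
  refine ⟨polyToRF D K d, ?_, fun a ha => ?_⟩
  · intro h; exact hd0 (polyToRF_inj D K (by rw [h, map_zero]))
  · have h1 := hd a ha
    rw [Algebra.smul_def, algMapDX_eq] at h1
    exact oneDX_le_polyExt_top D K h1

lemma bigTri_v_eq_bigTri_t {G : Submodule (Polynomial D) (RatFunc K)} (hG0 : G ≠ ⊥) (hG : G.FG) :
    bigTri D K (vFun D K) G = bigTri D K (finTypeFun D K (vFun D K)) G := by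
  unfold bigTri bigTriT
  by_cases hc : ∃ z : RatFunc K, z ≠ 0 ∧ ∀ a ∈ G,
      z * a ∈ polyExt D K (Subalgebra.toSubmodule (⊤ : Subalgebra D K))
  · rw [if_pos hc, if_pos hc]
    refine iInf_congr fun z => iInf_congr fun hz0 => iInf_congr fun hzG => ?_
    rw [vFun_eq_finType (content_ne_bot D K hG0 hz0 hzG) (content_fg D K hG hzG)]
  · rw [if_neg hc, if_neg hc]

lemma bigTri_v_eq_vDX {G : Submodule (Polynomial D) (RatFunc K)} (hG0 : G ≠ ⊥) (hG : G.FG) :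
    bigTri D K (vFun D K) G = vFun (Polynomial D) (RatFunc K) G := by
  obtain ⟨d, hd0, hd⟩ := vguard D K hG
  have hv : vFun (Polynomial D) (RatFunc K) G
      = (1 : Submodule (Polynomial D) (RatFunc K)) / (1 / G) := if_pos ⟨d, hd0, hd⟩
  have hc := triguard D K hG
  unfold bigTri bigTriT
  rw [if_pos hc, hv]
  apply le_antisymm
  · intro u hu
    rw [Submodule.mem_div_iff_forall_mul_mem]
    intro w hw
    rw [Submodule.mem_div_iff_forall_mul_mem] at hw
    by_cases hw0 : w = 0
    · rw [hw0, mul_zero]; exact Submodule.zero_mem _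
    · have hwG : ∀ a ∈ G, w * a ∈ polyExt D K (Subalgebra.toSubmodule (⊤ : Subalgebra D K)) :=
        fun a ha => oneDX_le_polyExt_top D K (hw a ha)
      simp only [Submodule.mem_iInf] at hu
      have hu2 := hu w hw0 hwG
      rw [← SetLike.mem_coe, Submodule.coe_pointwise_smul] at hu2
      rcases Set.mem_smul_set.1 hu2 with ⟨m, hm, hmu⟩
      have hmu' : w * u = m := by
        rw [← hmu, smul_eq_mul, mul_inv_cancel_left₀ hw0]
      have hCle : contentOf D K (w • (G : Set (RatFunc K))) ≤ 1 := by
        rw [contentOf, Submodule.span_le]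
        rintro x ⟨p, hp, n, rfl⟩
        rcases Set.mem_smul_set.1 hp with ⟨g, hgmem, hzg⟩
        rw [smul_eq_mul] at hzg
        rcases (mem_oneDX D K).1 (hw g hgmem) with ⟨q, hq⟩
        have hpq : p = q.map (algebraMap D K) := by
          apply iotaInj K
          rw [← hzg, ← hq, polyToRF_apply]
        rw [hpq, Polynomial.coeff_map]
        exact Submodule.mem_one.2 ⟨q.coeff n, rfl⟩
      have hmone : m ∈ (1 : Submodule (Polynomial D) (RatFunc K)) :=
        polyExt_le_oneDX D K (vFun_le_one hCle) hm
      rw [mul_comm, hmu']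
      exact hmone
  · intro u hu
    simp only [Submodule.mem_iInf]
    intro z hz0 hzG
    set C := contentOf D K (z • (G : Set (RatFunc K))) with hC
    have star : ∀ t : K, t ∈ (1 : Submodule D K) / C →
        ∃ q : Polynomial D, algebraMap K (RatFunc K) t * (z * u) = polyToRF D K q := by
      intro t ht
      have htz : algebraMap K (RatFunc K) t * z
          ∈ (1 : Submodule (Polynomial D) (RatFunc K)) / G := by
        rw [Submodule.mem_div_iff_forall_mul_mem]
        intro g hg
        rcases (mem_polyExt_topT D K).1 (hzG g hg) with ⟨p, hp⟩
        have hcoef : ∀ n, t * p.coeff n ∈ (1 : Submodule D K) := by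
          intro n
          refine Submodule.mem_div_iff_forall_mul_mem.1 ht _ ?_
          apply Submodule.subset_span
          refine ⟨p, ?_, n, rfl⟩
          rw [← hp]
          exact Set.smul_mem_smul_set hg
        obtain ⟨q, hq⟩ := exists_map_of_coeff_mem D K (p := Polynomial.C t * p)
          (fun n => by rw [Polynomial.coeff_C_mul]; exact hcoef n)
        refine (mem_oneDX D K).2 ⟨q, ?_⟩
        rw [polyToRF_apply, hq, map_mul, RatFunc.algebraMap_C, ← RatFunc.algebraMap_eq_C, ← hp]
        ring
      have h1 := Submodule.mem_div_iff_forall_mul_mem.1 hu _ htz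
      rcases (mem_oneDX D K).1 h1 with ⟨q, hq⟩
      exact ⟨q, by rw [hq]; ring⟩
    obtain ⟨t0, ht00, ht0⟩ := exists_t0 D K (content_fg D K hG hzG)
    have hτ0 : algebraMap K (RatFunc K) t0 ≠ 0 := by
      intro h
      exact ht00 ((algebraMap K (RatFunc K)).injective (by rw [h, map_zero]))
    obtain ⟨q0, hq0⟩ := star t0 ht0
    set P : Polynomial K := Polynomial.C t0⁻¹ * (q0.map (algebraMap D K)) with hP
    have hzuP : z * u = algebraMap (Polynomial K) (RatFunc K) P := by
      have hPe : algebraMap (Polynomial K) (RatFunc K) P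
          = (algebraMap K (RatFunc K) t0)⁻¹ * polyToRF D K q0 := by
        rw [hP, map_mul, RatFunc.algebraMap_C, ← RatFunc.algebraMap_eq_C, map_inv₀,
          ← polyToRF_apply]
      rw [hPe, ← hq0, inv_mul_cancel_left₀ hτ0]
    have hcoeff : ∀ n, P.coeff n ∈ vFun D K C := by
      intro n
      apply le_vFun_div
      rw [Submodule.mem_div_iff_forall_mul_mem]
      intro t ht
      obtain ⟨q, hq⟩ := star t ht
      have hCtP : Polynomial.C t * P = q.map (algebraMap D K) := by
        apply iotaInj K
        rw [map_mul, RatFunc.algebraMap_C, ← RatFunc.algebraMap_eq_C, ← hzuP, hq, polyToRF_apply]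
      have hco := congrArg (fun r => Polynomial.coeff r n) hCtP
      simp only [Polynomial.coeff_C_mul, Polynomial.coeff_map] at hco
      rw [mul_comm, hco]
      exact Submodule.mem_one.2 ⟨q.coeff n, rfl⟩
    have hmem : z * u ∈ polyExt D K (vFun D K C) := ⟨P, hcoeff, hzuP⟩
    have h2 := Submodule.smul_mem_pointwise_smul _ z⁻¹ _ hmem
    rwa [smul_eq_mul, inv_mul_cancel_left₀ hz0] at h2

end Helpers5

theorem finType_bigTri_v_eq_t (D K : Type*) [CommRing D] [IsDomain D] [Field K] [Algebra D K] [IsFractionRing D K] :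
    ∀ A : Submodule (Polynomial D) (RatFunc K), A ≠ ⊥ →
      finTypeFun (Polynomial D) (RatFunc K) (bigTri D K (vFun D K)) A =
        finTypeFun (Polynomial D) (RatFunc K) (bigTri D K (finTypeFun D K (vFun D K))) A ∧
      finTypeFun (Polynomial D) (RatFunc K) (bigTri D K (vFun D K)) A =
        finTypeFun (Polynomial D) (RatFunc K) (vFun (Polynomial D) (RatFunc K)) A := by
  intro A hA
  constructor
  · unfold finTypeFun
    exact iSup_congr fun G => iSup_congr fun hG0 => iSup_congr fun hGF => iSup_congr fun _ =>
      bigTri_v_eq_bigTri_t D K hG0 hGF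
  · unfold finTypeFun
    exact iSup_congr fun G => iSup_congr fun hG0 => iSup_congr fun hGF => iSup_congr fun _ =>
      bigTri_v_eq_vDX D K hG0 hGF
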